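/- With the Fock space operators as above, for every extended Young diagram Y and distinct integers i ≠ j, e_i^∞ f_j^∞ Y = f_j^∞ e_i^∞ Y. -/

import Mathlib

noncomputable section
open scoped Classical

abbrev K : Type := FractionRing (MvPolynomial (Fin 2) ℚ)

def rr : K := algebraMap (MvPolynomial (Fin 2) ℚ) K (MvPolynomial.X 0)
def ss : K := algebraMap (MvPolynomial (Fin 2) ℚ) K (MvPolynomial.X 1)

/-- An extended Young diagram of charge `n`: a weakly increasing integer sequence
eventually equal to `n`. -/
structure EYD (n : ℤ) where
  y : ℕ → ℤ
  mono : ∀ k, y k ≤ y (k + 1)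
  charge : ∃ N, ∀ k, N ≤ k → y k = n

namespace EYD

variable {n : ℤ}

/-- `Y` has a convex corner on diagonal `i` at column `k`. -/
def ConvexAt (Y : EYD n) (i : ℤ) (k : ℕ) : Prop :=
  Y.y k < Y.y (k + 1) ∧ Y.y k + k + 1 = i

/-- `Y` has a concave corner on diagonal `i` at column `k`. -/
def ConcaveAt (Y : EYD n) (i : ℤ) (k : ℕ) : Prop :=
  (k = 0 ∨ ∃ j, k = j + 1 ∧ Y.y j < Y.y k) ∧ Y.y k + k = i

/-- Replace the convex corner at column `k` by a concave one. -/
def up (Y : EYD n) (k : ℕ) (h : Y.y k < Y.y (k + 1)) : EYD n where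
  y := Function.update Y.y k (Y.y k + 1)
  mono := by
    intro m
    rcases eq_or_ne m k with rfl | h1
    · rw [Function.update_self, Function.update_of_ne (show m + 1 ≠ m by omega)]
      omega
    · rcases eq_or_ne (m + 1) k with h2 | h2
      · have hm := Y.mono m
        rw [Function.update_of_ne h1, h2, Function.update_self, ← h2]
        omega
      · rw [Function.update_of_ne h1, Function.update_of_ne h2]
        exact Y.mono m
  charge := by
    obtain ⟨N, hN⟩ := Y.charge
    exact ⟨max N (k + 1), fun m hm => by
      rw [Function.update_of_ne (show m ≠ k by omega)]
      exact hN m (by omega)⟩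

/-- Replace the concave corner at column `k` by a convex one. -/
def down (Y : EYD n) (k : ℕ) (h : k = 0 ∨ ∃ j, k = j + 1 ∧ Y.y j < Y.y k) : EYD n where
  y := Function.update Y.y k (Y.y k - 1)
  mono := by
    intro m
    rcases eq_or_ne m k with rfl | h1
    · rw [Function.update_self, Function.update_of_ne (show m + 1 ≠ m by omega)]
      have := Y.mono m
      omega
    · rcases eq_or_ne (m + 1) k with h2 | h2
      · rw [Function.update_of_ne h1, h2, Function.update_self]
        rcases h with h | ⟨j, hj, hjy⟩
        · omega
        · have : j = m := by omega
          subst this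
          omega
      · rw [Function.update_of_ne h1, Function.update_of_ne h2]
        exact Y.mono m
  charge := by
    obtain ⟨N, hN⟩ := Y.charge
    exact ⟨max N (k + 1), fun m hm => by
      rw [Function.update_of_ne (show m ≠ k by omega)]
      exact hN m (by omega)⟩

/-- The action of `e_i^∞` on a diagram: turn the convex corner on diagonal `i`
into a concave one, if any. -/
def eAct (i : ℤ) (Y : EYD n) : Option (EYD n) :=
  if h : ∃ k, Y.ConvexAt i k then some (Y.up h.choose h.choose_spec.1) else none

/-- The action of `f_i^∞` on a diagram: turn the concave corner on diagonal `i`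
into a convex one, if any. -/
def fAct (i : ℤ) (Y : EYD n) : Option (EYD n) :=
  if h : ∃ k, Y.ConcaveAt i k then some (Y.down h.choose h.choose_spec.1) else none

end EYD

/-- The Fock space of charge `n`. -/
abbrev Fock (n : ℤ) : Type := EYD n →₀ K

def ovec {n : ℤ} (o : Option (EYD n)) : Fock n :=
  o.elim 0 fun Y => Finsupp.single Y 1

/-- The linear operator on Fock space induced by a partially defined map on diagrams. -/
def opOf {n : ℤ} (a : EYD n → Option (EYD n)) : Fock n →ₗ[K] Fock n :=
  Finsupp.lsum K fun Y => LinearMap.smulRight (LinearMap.id : K →ₗ[K] K) (ovec (a Y))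

/-- A diagonal operator on Fock space. -/
def diagOp {n : ℤ} (c : EYD n → K) : Fock n →ₗ[K] Fock n :=
  Finsupp.lsum K fun Y => LinearMap.smulRight (LinearMap.id : K →ₗ[K] K) (c Y • Finsupp.single Y 1)

def Eop (n i : ℤ) : Fock n →ₗ[K] Fock n := opOf (EYD.eAct i)
def Fop (n i : ℤ) : Fock n →ₗ[K] Fock n := opOf (EYD.fAct i)

/-!
Read a diagram through its diagonal contents `d k = y k + k`, a strictly increasing sequence,
i.e. through its Maya diagram `{d k} ⊆ ℤ`. A convex corner on diagonal `i` means that site `i - 1`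
is occupied and `i` is free, a concave corner on diagonal `j` that `j` is occupied and `j - 1` is
free; `e_i` moves that particle from `i - 1` to `i`, and `f_j` moves it from `j` to `j - 1`.
For `i ≠ j` the two moves either concern disjoint pairs of sites and commute, or (when
`|i - j| = 1`) each one destroys the precondition of the other, so both composites vanish.
-/

theorem Function.Injective.mem_range_update {α β : Type*} [DecidableEq α] {f : α → β}
    (hf : Function.Injective f) (k : α) (b x : β) :
    x ∈ Set.range (Function.update f k b) ↔ x = b ∨ (x ∈ Set.range f ∧ x ≠ f k) := by
  constructor
  · rintro ⟨c, rfl⟩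
    by_cases hc : c = k
    · simp [hc]
    · exact Or.inr ⟨⟨c, (Function.update_of_ne hc _ _).symm⟩, by
        rw [Function.update_of_ne hc]; exact hf.ne hc⟩
  · rintro (rfl | ⟨⟨c, rfl⟩, hne⟩)
    · exact ⟨k, Function.update_self _ _ _⟩
    · exact ⟨c, Function.update_of_ne (fun hc => hne (by rw [hc])) _ _⟩

namespace EYD

variable {n : ℤ}

@[ext]
theorem ext {Y Z : EYD n} (h : Y.y = Z.y) : Y = Z := by
  cases Y; cases Z; cases h; rfl

def diag (Y : EYD n) (k : ℕ) : ℤ := Y.y k + k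

def maya (Y : EYD n) : Set ℤ := Set.range Y.diag

theorem diag_strictMono (Y : EYD n) : StrictMono Y.diag :=
  strictMono_nat_of_lt_succ fun k => by have := Y.mono k; simp only [diag]; push_cast; omega

theorem convexAt_iff {Y : EYD n} {i : ℤ} {k : ℕ} :
    Y.ConvexAt i k ↔ Y.diag k = i - 1 ∧ i ∉ Y.maya := by
  have hmono := Y.diag_strictMono.monotone
  have hsucc : Y.diag (k + 1) = Y.y (k + 1) + k + 1 := by simp only [diag]; push_cast; ring
  simp only [ConvexAt, maya, Set.mem_range, not_exists]
  constructor
  · rintro ⟨hlt, hk⟩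
    refine ⟨by simp only [diag]; omega, fun c hc => ?_⟩
    rcases lt_or_ge k c with hkc | hck
    · have := hmono (show k + 1 ≤ c by omega)
      omega
    · have := hmono hck
      simp only [diag] at this hc; omega
  · rintro ⟨hk, hfree⟩
    have := Y.mono k
    have := hfree (k + 1)
    simp only [diag] at hk
    exact ⟨by omega, by omega⟩

theorem concaveAt_iff {Y : EYD n} {j : ℤ} {k : ℕ} :
    Y.ConcaveAt j k ↔ Y.diag k = j ∧ j - 1 ∉ Y.maya := by
  have hmono := Y.diag_strictMono
  simp only [ConcaveAt, maya, Set.mem_range, not_exists]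
  constructor
  · rintro ⟨hcol, hk⟩
    refine ⟨hk, fun c hc => ?_⟩
    have hck : c < k := hmono.lt_iff_lt.mp (by simp only [diag] at hc ⊢; omega)
    rcases hcol with rfl | ⟨p, rfl, hp⟩
    · omega
    · have := hmono.monotone (Nat.le_of_lt_succ hck)
      simp only [diag] at this hc; push_cast at hk; omega
  · rintro ⟨hk, hfree⟩
    refine ⟨?_, hk⟩
    rcases k with _ | p
    · exact Or.inl rfl
    · have := Y.mono p
      have := hfree p
      simp only [diag] at this hk; push_cast at hk
      exact Or.inr ⟨p, rfl, by omega⟩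

theorem exists_convexAt_iff {Y : EYD n} {i : ℤ} :
    (∃ k, Y.ConvexAt i k) ↔ i - 1 ∈ Y.maya ∧ i ∉ Y.maya := by
  simp only [convexAt_iff, maya, Set.mem_range]
  tauto

theorem exists_concaveAt_iff {Y : EYD n} {j : ℤ} :
    (∃ k, Y.ConcaveAt j k) ↔ j ∈ Y.maya ∧ j - 1 ∉ Y.maya := by
  simp only [concaveAt_iff, maya, Set.mem_range]
  tauto

theorem diag_up (Y : EYD n) (k : ℕ) (h : Y.y k < Y.y (k + 1)) :
    (Y.up k h).diag = Function.update Y.diag k (Y.diag k + 1) := by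
  funext c
  by_cases hc : c = k
  · subst hc; simp only [diag, up, Function.update_self]; ring
  · simp only [diag, up, Function.update_of_ne hc]

theorem diag_down (Y : EYD n) (k : ℕ) (h : k = 0 ∨ ∃ j, k = j + 1 ∧ Y.y j < Y.y k) :
    (Y.down k h).diag = Function.update Y.diag k (Y.diag k - 1) := by
  funext c
  by_cases hc : c = k
  · subst hc; simp only [diag, down, Function.update_self]; ring
  · simp only [diag, down, Function.update_of_ne hc]

theorem mem_maya_up (Y : EYD n) (k : ℕ) (h : Y.y k < Y.y (k + 1)) (a : ℤ) :
    a ∈ (Y.up k h).maya ↔ a = Y.diag k + 1 ∨ (a ∈ Y.maya ∧ a ≠ Y.diag k) := by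
  rw [maya, diag_up]
  exact Y.diag_strictMono.injective.mem_range_update _ _ _

theorem mem_maya_down (Y : EYD n) (k : ℕ) (h : k = 0 ∨ ∃ j, k = j + 1 ∧ Y.y j < Y.y k)
    (a : ℤ) : a ∈ (Y.down k h).maya ↔ a = Y.diag k - 1 ∨ (a ∈ Y.maya ∧ a ≠ Y.diag k) := by
  rw [maya, diag_down]
  exact Y.diag_strictMono.injective.mem_range_update _ _ _

theorem up_down_comm (Y : EYD n) {k m : ℕ} (hkm : k ≠ m)
    (hk : k = 0 ∨ ∃ j, k = j + 1 ∧ Y.y j < Y.y k) (hm : Y.y m < Y.y (m + 1))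
    (hm' : (Y.down k hk).y m < (Y.down k hk).y (m + 1))
    (hk' : k = 0 ∨ ∃ j, k = j + 1 ∧ (Y.up m hm).y j < (Y.up m hm).y k) :
    (Y.down k hk).up m hm' = (Y.up m hm).down k hk' := by
  ext1
  simp only [up, down, Function.update_of_ne hkm, Function.update_of_ne hkm.symm]
  exact Function.update_comm hkm _ _ _

theorem eAct_of_convexAt {Y : EYD n} {i : ℤ} {k : ℕ} (h : Y.ConvexAt i k) :
    eAct i Y = some (Y.up k h.1) := by
  have hex : ∃ c, Y.ConvexAt i c := ⟨k, h⟩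
  have hk : hex.choose = k := Y.diag_strictMono.injective <| by
    rw [(convexAt_iff.mp hex.choose_spec).1, (convexAt_iff.mp h).1]
  rw [eAct, dif_pos hex]
  congr 1
  ext1
  simp only [up, hk]

theorem fAct_of_concaveAt {Y : EYD n} {j : ℤ} {k : ℕ} (h : Y.ConcaveAt j k) :
    fAct j Y = some (Y.down k h.1) := by
  have hex : ∃ c, Y.ConcaveAt j c := ⟨k, h⟩
  have hk : hex.choose = k := Y.diag_strictMono.injective <| by
    rw [(concaveAt_iff.mp hex.choose_spec).1, (concaveAt_iff.mp h).1]
  rw [fAct, dif_pos hex]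
  congr 1
  ext1
  simp only [down, hk]

theorem eAct_eq_none {Y : EYD n} {i : ℤ} (h : ¬(i - 1 ∈ Y.maya ∧ i ∉ Y.maya)) :
    eAct i Y = none :=
  dif_neg (exists_convexAt_iff.not.mpr h)

theorem fAct_eq_none {Y : EYD n} {j : ℤ} (h : ¬(j ∈ Y.maya ∧ j - 1 ∉ Y.maya)) :
    fAct j Y = none :=
  dif_neg (exists_concaveAt_iff.not.mpr h)

theorem fAct_bind_eAct_comm {i j : ℤ} (hij : i ≠ j) (Y : EYD n) :
    (fAct j Y).bind (eAct i) = (eAct i Y).bind (fAct j) := by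
  by_cases hF : j ∈ Y.maya ∧ j - 1 ∉ Y.maya <;> by_cases hE : i - 1 ∈ Y.maya ∧ i ∉ Y.maya
  · obtain ⟨k, hk⟩ := exists_concaveAt_iff.mpr hF
    obtain ⟨m, hm⟩ := exists_convexAt_iff.mpr hE
    have hdk := (concaveAt_iff.mp hk).1
    have hdm := (convexAt_iff.mp hm).1
    rw [fAct_of_concaveAt hk, eAct_of_convexAt hm, Option.bind_some, Option.bind_some]
    by_cases hadj : i = j + 1 ∨ j = i + 1
    · rw [eAct_eq_none, fAct_eq_none]
      · simp only [mem_maya_up]; grind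
      · simp only [mem_maya_down]; grind
    · have hkm : k ≠ m := fun h => by subst h; omega
      have hconv : (Y.down k hk.1).ConvexAt i m := by
        rw [convexAt_iff, diag_down, Function.update_of_ne hkm.symm, mem_maya_down]
        grind
      have hconc : (Y.up m hm.1).ConcaveAt j k := by
        rw [concaveAt_iff, diag_up, Function.update_of_ne hkm, mem_maya_up]
        grind
      rw [eAct_of_convexAt hconv, fAct_of_concaveAt hconc, up_down_comm _ hkm]
  · obtain ⟨k, hk⟩ := exists_concaveAt_iff.mpr hF
    have hdk := (concaveAt_iff.mp hk).1
    rw [fAct_of_concaveAt hk, eAct_eq_none hE, Option.bind_some, Option.bind_none, eAct_eq_none]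
    simp only [mem_maya_down]
    grind
  · obtain ⟨m, hm⟩ := exists_convexAt_iff.mpr hE
    have hdm := (convexAt_iff.mp hm).1
    rw [eAct_of_convexAt hm, fAct_eq_none hF, Option.bind_some, Option.bind_none, fAct_eq_none]
    simp only [mem_maya_up]
    grind
  · rw [eAct_eq_none hE, fAct_eq_none hF, Option.bind_none, Option.bind_none]

end EYD

theorem opOf_single {n : ℤ} (a : EYD n → Option (EYD n)) (Y : EYD n) :
    opOf a (Finsupp.single Y 1) = ovec (a Y) := by
  simp [opOf]

theorem opOf_ovec {n : ℤ} (a : EYD n → Option (EYD n)) (o : Option (EYD n)) :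
    opOf a (ovec o) = ovec (o.bind a) := by
  cases o with
  | none => simp [ovec]
  | some Z => exact opOf_single a Z

/-- For distinct `i ≠ j`, the Fock space operators `e_i^∞` and `f_j^∞` commute on
every basis vector. -/
theorem stmt_12 (n i j : ℤ) (hij : i ≠ j) (Y : EYD n) :
    Eop n i (Fop n j (Finsupp.single Y 1)) = Fop n j (Eop n i (Finsupp.single Y 1)) := by
  rw [Eop, Fop, opOf_single, opOf_single, opOf_ovec, opOf_ovec, EYD.fAct_bind_eAct_comm hij Y]
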